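/- For every c ∈ [−1,1], the real symmetric 4×4 matrix Mb(c) is negative semidefinite (equivalently, all its eigenvalues are non-positive): xᵀ Mb(c) x ≤ 0 for all x ∈ ℝ⁴. -/

import Mathlib

/-!
`Mb(c)` is affine in `c`, hence the convex combination `(1+c)/2 • Mb(1) + (1-c)/2 • Mb(-1)` for
`c ∈ [-1,1]`. Both endpoint matrices are negative definite, as witnessed by `LDLᵀ` factorizations
of their negatives with unit lower-triangular `L` and positive pivots `D`.
-/

open Matrix

/-- The matrix `Mb(c)`: 36h times the matrix of the interface quadratic form
`Θ_{3/2}` at the first interior interface of the two-point-block BFD scheme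
for the heat equation with Dirichlet boundary conditions. -/
noncomputable def Mbmat (c : ℝ) : Matrix (Fin 4) (Fin 4) ℝ :=
  !![3*(8*c-19),   71-40*c,        (8*c-7)/2,    (1-8*c)/2;
     71-40*c,      56*c-169,       (113-40*c)/2, (40*c-23)/2;
     (8*c-7)/2,    (113-40*c)/2,   56*c-169,     71-40*c;
     (1-8*c)/2,    (40*c-23)/2,    71-40*c,      3*(8*c-19)]

theorem Matrix.posSemidef_mul_diagonal_mul_transpose {n R : Type*} [Fintype n] [DecidableEq n]
    [CommRing R] [PartialOrder R] [StarRing R] [TrivialStar R] [StarOrderedRing R]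
    (L : Matrix n n R) {d : n → R} (hd : 0 ≤ d) : (L * diagonal d * Lᵀ).PosSemidef := by
  simpa only [conjTranspose_eq_transpose_of_trivial] using
    (PosSemidef.diagonal hd).mul_mul_conjTranspose_same L

theorem Mbmat_eq_smul_add_smul (c : ℝ) :
    Mbmat c = ((1 + c) / 2) • Mbmat 1 + ((1 - c) / 2) • Mbmat (-1) := by
  ext i j
  fin_cases i <;> fin_cases j <;>
    simp only [Mbmat, Fin.zero_eta, Fin.mk_one, Fin.reduceFinMk, Fin.isValue, smul_of, smul_cons,
      smul_empty, smul_eq_mul, Matrix.add_apply, of_apply, cons_val', cons_val, cons_val_zero,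
      cons_val_one, cons_val_fin_one] <;>
    ring

theorem neg_Mbmat_one_eq_LDLT :
    -Mbmat 1 =
      !![1, 0, 0, 0;
         -31/33, 1, 0, 0;
         -1/66, -305/692, 1, 0;
         7/66, -43/692, -4601/13383, 1] *
        diagonal ![33, 2768/33, 66915/692, 279380/13383] *
      (!![1, 0, 0, 0;
         -31/33, 1, 0, 0;
         -1/66, -305/692, 1, 0;
         7/66, -43/692, -4601/13383, 1])ᵀ := by
  ext i j
  fin_cases i <;> fin_cases j <;>
    norm_num [Mbmat, mul_apply, vecMul_diagonal, Fin.sum_univ_four, cons_val_two, cons_val_three]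

theorem neg_Mbmat_neg_one_eq_LDLT :
    -Mbmat (-1) =
      !![1, 0, 0, 0;
         -37/27, 1, 0, 0;
         5/54, -149/164, 1, 0;
         -1/18, 57/164, -4787/8973, 1] *
        diagonal ![81, 656/9, 26919/164, 75460/2991] *
      (!![1, 0, 0, 0;
         -37/27, 1, 0, 0;
         5/54, -149/164, 1, 0;
         -1/18, 57/164, -4787/8973, 1])ᵀ := by
  ext i j
  fin_cases i <;> fin_cases j <;>
    norm_num [Mbmat, mul_apply, vecMul_diagonal, Fin.sum_univ_four, cons_val_two, cons_val_three]

theorem posSemidef_neg_Mbmat_one : (-Mbmat 1).PosSemidef := by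
  rw [neg_Mbmat_one_eq_LDLT]
  refine posSemidef_mul_diagonal_mul_transpose _ fun i => ?_
  fin_cases i <;> norm_num

theorem posSemidef_neg_Mbmat_neg_one : (-Mbmat (-1)).PosSemidef := by
  rw [neg_Mbmat_neg_one_eq_LDLT]
  refine posSemidef_mul_diagonal_mul_transpose _ fun i => ?_
  fin_cases i <;> norm_num

/-- For every `c ∈ [-1,1]`, `Mb(c)` is negative semidefinite:
`xᵀ Mb(c) x ≤ 0` for all `x ∈ ℝ⁴`. -/
theorem Mbmat_negSemidef (c : ℝ) (hc : c ∈ Set.Icc (-1 : ℝ) 1) (x : Fin 4 → ℝ) :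
    x ⬝ᵥ (Mbmat c *ᵥ x) ≤ 0 := by
  have hp : 0 ≤ (1 + c) / 2 := by linarith [hc.1]
  have hm : 0 ≤ (1 - c) / 2 := by linarith [hc.2]
  have hpsd : (-Mbmat c).PosSemidef := by
    rw [Mbmat_eq_smul_add_smul, neg_add, ← smul_neg, ← smul_neg]
    exact (posSemidef_neg_Mbmat_one.smul hp).add (posSemidef_neg_Mbmat_neg_one.smul hm)
  simpa [neg_mulVec] using hpsd.dotProduct_mulVec_nonneg x
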